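/- Let A be a Banach algebra that is a left ideal in its bidual A** (with the first Arens product). Then the canonical image of A is contained in the weak left topological center Z̃₁ˡ(A**), i.e., for every a ∈ A the map a'' ↦ a·a'' from A** to A** is weak*-to-weak continuous. -/

import Mathlib

open NormedSpace ContinuousLinearMap

noncomputable section

namespace NormedSpace

/-- The topological dual of a seminormed space `E` (as in the older Mathlib). -/
def Dual (𝕜 : Type*) [NontriviallyNormedField 𝕜] (E : Type*) [SeminormedAddCommGroup E]
    [NormedSpace 𝕜 E] := E →L[𝕜] 𝕜

instance (𝕜 : Type*) [NontriviallyNormedField 𝕜] (E : Type*) [NormedAddCommGroup E]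
    [NormedSpace 𝕜 E] : NormedAddCommGroup (Dual 𝕜 E) :=
  ContinuousLinearMap.toNormedAddCommGroup

instance (𝕜 : Type*) [NontriviallyNormedField 𝕜] (E : Type*) [NormedAddCommGroup E]
    [NormedSpace 𝕜 E] : NormedSpace 𝕜 (Dual 𝕜 E) :=
  ContinuousLinearMap.toNormedSpace

instance (𝕜 : Type*) [NontriviallyNormedField 𝕜] (E : Type*) [SeminormedAddCommGroup E]
    [NormedSpace 𝕜 E] : FunLike (Dual 𝕜 E) E 𝕜 :=
  ContinuousLinearMap.funLike

instance (𝕜 : Type*) [NontriviallyNormedField 𝕜] (E : Type*) [SeminormedAddCommGroup E]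
    [NormedSpace 𝕜 E] : ContinuousLinearMapClass (Dual 𝕜 E) 𝕜 E 𝕜 :=
  ContinuousLinearMap.continuousSemilinearMapClass

end NormedSpace

section Core

variable (X Y Z : Type*)
  [NormedAddCommGroup X] [NormedSpace ℝ X]
  [NormedAddCommGroup Y] [NormedSpace ℝ Y]
  [NormedAddCommGroup Z] [NormedSpace ℝ Z]

/-- The dual (adjoint) map of a continuous linear map. -/
def dualMapCLM (T : X →L[ℝ] Y) : Dual ℝ Y →L[ℝ] Dual ℝ X :=
  (ContinuousLinearMap.compSL X Y ℝ (RingHom.id ℝ) (RingHom.id ℝ)).flip T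

variable {X Y Z}

/-- The adjoint of a continuous bilinear map `m : X × Y → Z`, as a bilinear map
`Z* × X → Y*`, `⟨adjBil m z' x, y⟩ = ⟨z', m x y⟩`. -/
def adjBil (m : X →L[ℝ] Y →L[ℝ] Z) : Dual ℝ Z →L[ℝ] X →L[ℝ] Dual ℝ Y :=
  ((ContinuousLinearMap.compSL X (Y →L[ℝ] Z) (Dual ℝ Y) (RingHom.id ℝ) (RingHom.id ℝ)).flip m).comp
    (ContinuousLinearMap.compSL Y Z ℝ (RingHom.id ℝ) (RingHom.id ℝ))

/-- The first Arens extension of a continuous bilinear map `X × Y → Z`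
to the biduals, `X** × Y** → Z**`. -/
def arensExt (m : X →L[ℝ] Y →L[ℝ] Z) :
    Dual ℝ (Dual ℝ X) →L[ℝ] Dual ℝ (Dual ℝ Y) →L[ℝ] Dual ℝ (Dual ℝ Z) :=
  adjBil (adjBil (adjBil m))

variable (E : Type*) [NormedAddCommGroup E] [NormedSpace ℝ E]

/-- The weak-* topology on the bidual `E**`, i.e. the topology of pointwise
convergence on `E*`. -/
def weakStarTop : TopologicalSpace (Dual ℝ (Dual ℝ E)) :=
  ⨅ f : Dual ℝ E, TopologicalSpace.induced (fun F => F f) inferInstance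

/-- The weak topology on the bidual `E**`, i.e. the topology of pointwise
convergence on `E***`. -/
def weakTop : TopologicalSpace (Dual ℝ (Dual ℝ E)) :=
  ⨅ Φ : Dual ℝ (Dual ℝ (Dual ℝ E)), TopologicalSpace.induced (fun F => Φ F) inferInstance

end Core

section Algebra

variable (A : Type*) [NonUnitalNormedRing A] [NormedSpace ℝ A]
  [IsScalarTower ℝ A A] [SMulCommClass ℝ A A]

/-- The first Arens product on the bidual of a Banach algebra. -/
def arens1 : Dual ℝ (Dual ℝ A) →L[ℝ] Dual ℝ (Dual ℝ A) →L[ℝ] Dual ℝ (Dual ℝ A) :=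
  arensExt (ContinuousLinearMap.mul ℝ A)

/-- The second Arens product on the bidual of a Banach algebra. -/
def arens2 (F G : Dual ℝ (Dual ℝ A)) : Dual ℝ (Dual ℝ A) :=
  arensExt ((ContinuousLinearMap.mul ℝ A).flip) G F

/-- The weak left topological center of `A**`: those `F` such that
`G ↦ F □ G` is weak-*-to-weak continuous. -/
def weakLeftCenter : Set (Dual ℝ (Dual ℝ A)) :=
  { F | ∀ Φ : Dual ℝ (Dual ℝ (Dual ℝ A)),
      @Continuous _ _ (weakStarTop A) _ fun G => Φ (arens1 A F G) }

/-- The left topological center of `A**`: those `F` such that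
`G ↦ F □ G` is weak-*-to-weak-* continuous. -/
def leftCenter : Set (Dual ℝ (Dual ℝ A)) :=
  { F | ∀ f : Dual ℝ A,
      @Continuous _ _ (weakStarTop A) _ fun G => arens1 A F G f }

end Algebra

/-! For `Φ ∈ A***` put `f := Φ ∘ ι ∈ A*`, so that `Φ` agrees with evaluation at `f` on the
canonical image `ι(A)`. As `a □ G` lies in `ι(A)`, `Φ (a □ G) = (a □ G) f = G (f · a)`: this is
evaluation of `G` at the fixed functional `f · a`, hence weak-* continuous in `G`. -/

section ArensExtension

variable {X Y Z : Type*}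
  [NormedAddCommGroup X] [NormedSpace ℝ X]
  [NormedAddCommGroup Y] [NormedSpace ℝ Y]
  [NormedAddCommGroup Z] [NormedSpace ℝ Z]

theorem continuous_weakStarTop_eval (f : Dual ℝ Y) :
    @Continuous _ _ (weakStarTop Y) _ fun F : Dual ℝ (Dual ℝ Y) => F f :=
  continuous_iInf_dom continuous_induced_dom

theorem apply_eq_apply_comp_inclusionInDoubleDual (Φ : Dual ℝ (Dual ℝ (Dual ℝ Z)))
    {F : Dual ℝ (Dual ℝ Z)} (hF : F ∈ Set.range (inclusionInDoubleDual ℝ Z)) :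
    Φ F = F (Φ.comp (inclusionInDoubleDual ℝ Z)) := by
  obtain ⟨z, rfl⟩ := hF
  rfl

theorem arensExt_inclusionInDoubleDual_apply (m : X →L[ℝ] Y →L[ℝ] Z) (x : X)
    (G : Dual ℝ (Dual ℝ Y)) (f : Dual ℝ Z) :
    arensExt m (inclusionInDoubleDual ℝ X x) G f = G (adjBil m f x) :=
  rfl

theorem continuous_weakStarTop_apply_arensExt_inclusionInDoubleDual (m : X →L[ℝ] Y →L[ℝ] Z)
    (x : X) (hx : ∀ G, arensExt m (inclusionInDoubleDual ℝ X x) G ∈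
      Set.range (inclusionInDoubleDual ℝ Z))
    (Φ : Dual ℝ (Dual ℝ (Dual ℝ Z))) :
    @Continuous _ _ (weakStarTop Y) _ fun G => Φ (arensExt m (inclusionInDoubleDual ℝ X x) G) := by
  have hΦ : (fun G => Φ (arensExt m (inclusionInDoubleDual ℝ X x) G)) =
      fun G => G (adjBil m (Φ.comp (inclusionInDoubleDual ℝ Z)) x) := by
    funext G
    exact (apply_eq_apply_comp_inclusionInDoubleDual Φ (hx G)).trans
      (arensExt_inclusionInDoubleDual_apply m x G _)
  rw [hΦ]
  exact continuous_weakStarTop_eval _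

end ArensExtension

theorem stmt3_general (A : Type*) [NonUnitalNormedRing A] [NormedSpace ℝ A]
    [IsScalarTower ℝ A A] [SMulCommClass ℝ A A]
    (h : ∀ (a : A) (F : Dual ℝ (Dual ℝ A)),
      arens1 A (inclusionInDoubleDual ℝ A a) F ∈ Set.range (inclusionInDoubleDual ℝ A)) :
    ∀ a : A, inclusionInDoubleDual ℝ A a ∈ weakLeftCenter A :=
  fun a => continuous_weakStarTop_apply_arensExt_inclusionInDoubleDual _ a (h a)

/-- If `A` is a left ideal in `A**` (i.e. `A · A** ⊆ A` for the first
Arens product), then the canonical image of `A` lies in the weak left topological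
center of `A**`. -/
theorem stmt3 (A : Type*) [NonUnitalNormedRing A] [NormedSpace ℝ A]
    [IsScalarTower ℝ A A] [SMulCommClass ℝ A A] [CompleteSpace A]
    (h : ∀ (a : A) (F : Dual ℝ (Dual ℝ A)),
      arens1 A (inclusionInDoubleDual ℝ A a) F ∈ Set.range (inclusionInDoubleDual ℝ A)) :
    ∀ a : A, inclusionInDoubleDual ℝ A a ∈ weakLeftCenter A :=
  stmt3_general A h
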